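/- arXiv:0803.0898 — 2 statements merged into one kernel-verified Lean document; each statement's English description precedes it below -/
import Mathlib

section
/- Let f : ℕ × ℕ → ℝ be a function with |f(n,m)| ≤ 1 for all n,m ≥ 1, satisfying |f(pn,m) - f(n,m)| ≤ 1/n and |f(n,qm) - f(n,m)| ≤ 1/m for all natural numbers p,q,n,m ≥ 1. Then f has a limit as n,m → ∞: there exists L ∈ ℝ such that for every ε > 0 there is N with |f(n,m) - L| ≤ ε whenever n,m ≥ N. -/
theorem stmt0 (f : ℕ × ℕ → ℝ)
    (hbd : ∀ n m : ℕ, 1 ≤ n → 1 ≤ m → |f (n, m)| ≤ 1)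
    (h1 : ∀ p n m : ℕ, 1 ≤ p → 1 ≤ n → 1 ≤ m → |f (p * n, m) - f (n, m)| ≤ 1 / n)
    (h2 : ∀ q n m : ℕ, 1 ≤ q → 1 ≤ n → 1 ≤ m → |f (n, q * m) - f (n, m)| ≤ 1 / m) :
    ∃ L : ℝ, ∀ ε > 0, ∃ N : ℕ, ∀ n m : ℕ, N ≤ n → N ≤ m → |f (n, m) - L| ≤ ε := by
  -- comparing f (n, m) with f (n*m, n*m)
  have rect : ∀ n m : ℕ, 1 ≤ n → 1 ≤ m →
      |f (n, m) - f (n * m, n * m)| ≤ 1 / n + 1 / m := by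
    intro n m hn hm
    have hnm : 1 ≤ n * m := Nat.one_le_iff_ne_zero.2 (by positivity)
    have a := h1 m n m hm hn hm
    have b := h2 n (n * m) m hn hnm hm
    have a' : |f (n, m) - f (n * m, m)| ≤ 1 / n := by
      rw [abs_sub_comm, mul_comm n m]; exact a
    have b' : |f (n * m, m) - f (n * m, n * m)| ≤ 1 / m := by
      rw [abs_sub_comm]; exact b
    calc |f (n, m) - f (n * m, n * m)|
        ≤ |f (n, m) - f (n * m, m)| + |f (n * m, m) - f (n * m, n * m)| :=
          abs_sub_le _ _ _
      _ ≤ 1 / n + 1 / m := add_le_add a' b'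
  -- multiply diagonal
  have key : ∀ p k : ℕ, 1 ≤ p → 1 ≤ k → |f (k, k) - f (p * k, p * k)| ≤ 2 / k := by
    intro p k hp hk
    have hpk : 1 ≤ p * k := Nat.one_le_iff_ne_zero.2 (by positivity)
    have a := h1 p k k hp hk hk
    have b := h2 p (p * k) k hp hpk hk
    have a' : |f (k, k) - f (p * k, k)| ≤ 1 / k := by rw [abs_sub_comm]; exact a
    have b' : |f (p * k, k) - f (p * k, p * k)| ≤ 1 / k := by rw [abs_sub_comm]; exact b
    calc |f (k, k) - f (p * k, p * k)|
        ≤ |f (k, k) - f (p * k, k)| + |f (p * k, k) - f (p * k, p * k)| := abs_sub_le _ _ _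
      _ ≤ 1 / k + 1 / k := add_le_add a' b'
      _ = 2 / k := by ring
  have diag : ∀ k l : ℕ, 1 ≤ k → 1 ≤ l → |f (k, k) - f (l, l)| ≤ 2 / k + 2 / l := by
    intro k l hk hl
    have a := key l k hl hk
    have b : |f (l * k, l * k) - f (l, l)| ≤ 2 / l := by
      rw [mul_comm l k, abs_sub_comm]; exact key k l hk hl
    calc |f (k, k) - f (l, l)|
        ≤ |f (k, k) - f (l * k, l * k)| + |f (l * k, l * k) - f (l, l)| := abs_sub_le _ _ _
      _ ≤ 2 / k + 2 / l := add_le_add a b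
  set g : ℕ → ℝ := fun k => f (k + 1, k + 1) with hg
  have hgb : ∀ n m N : ℕ, N ≤ n → N ≤ m → dist (g n) (g m) ≤ 4 / (N + 1) := by
    intro n m N hn hm
    have h1n : (N : ℝ) + 1 ≤ (n : ℝ) + 1 := by exact_mod_cast by omega
    have h1m : (N : ℝ) + 1 ≤ (m : ℝ) + 1 := by exact_mod_cast by omega
    have hN0 : (0 : ℝ) < (N : ℝ) + 1 := by positivity
    have d := diag (n + 1) (m + 1) (by omega) (by omega)
    rw [Real.dist_eq]
    refine le_trans (by exact_mod_cast d) ?_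
    have e1 : 2 / ((n : ℝ) + 1) ≤ 2 / ((N : ℝ) + 1) := by
      apply div_le_div_of_nonneg_left (by norm_num) hN0 h1n
    have e2 : 2 / ((m : ℝ) + 1) ≤ 2 / ((N : ℝ) + 1) := by
      apply div_le_div_of_nonneg_left (by norm_num) hN0 h1m
    have e3 : 2 / ((N : ℝ) + 1) + 2 / ((N : ℝ) + 1) = 4 / ((N : ℝ) + 1) := by ring
    push_cast
    linarith
  have hc : CauchySeq g := by
    apply cauchySeq_of_le_tendsto_0 (fun N : ℕ => 4 / ((N : ℝ) + 1)) hgb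
    have := tendsto_one_div_add_atTop_nhds_zero_nat.const_mul (4 : ℝ)
    simpa [div_eq_mul_inv, mul_comm] using this
  obtain ⟨L, hL⟩ := cauchySeq_tendsto_of_complete hc
  -- tail estimate
  have htail : ∀ j : ℕ, |g j - L| ≤ 2 / (j + 1) := by
    intro j
    have t1 : Filter.Tendsto (fun l => |g j - g l|) Filter.atTop (nhds |g j - L|) :=
      ((tendsto_const_nhds.sub hL).abs)
    have t2 : Filter.Tendsto (fun l : ℕ => 2 / ((j : ℝ) + 1) + 2 / ((l : ℝ) + 1))
        Filter.atTop (nhds (2 / ((j : ℝ) + 1))) := by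
      have := tendsto_one_div_add_atTop_nhds_zero_nat.const_mul (2 : ℝ)
      have t := (tendsto_const_nhds (x := 2 / ((j : ℝ) + 1)) (f := (Filter.atTop : Filter ℕ))).add this
      simpa [div_eq_mul_inv] using t
    have hle : ∀ l : ℕ, |g j - g l| ≤ 2 / ((j : ℝ) + 1) + 2 / ((l : ℝ) + 1) := by
      intro l
      have := diag (j + 1) (l + 1) (by omega) (by omega)
      push_cast at this ⊢
      exact this
    exact le_of_tendsto_of_tendsto' t1 t2 hle
  have htail' : ∀ j : ℕ, 1 ≤ j → |f (j, j) - L| ≤ 2 / j := by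
    intro j hj
    have := htail (j - 1)
    have hj1 : j - 1 + 1 = j := Nat.succ_pred_eq_of_pos hj
    rw [hg] at this
    simp only [hj1] at this
    have : |f (j, j) - L| ≤ 2 / (((j - 1 : ℕ) : ℝ) + 1) := this
    have hc : (((j - 1 : ℕ) : ℝ) + 1) = (j : ℝ) := by exact_mod_cast congrArg Nat.cast hj1
    rwa [hc] at this
  refine ⟨L, fun ε hε => ?_⟩
  refine ⟨max 1 ⌈4 / ε⌉₊, fun n m hn hm => ?_⟩
  have hn1 : 1 ≤ n := le_trans (le_max_left _ _) hn
  have hm1 : 1 ≤ m := le_trans (le_max_left _ _) hm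
  have hnm : 1 ≤ n * m := Nat.one_le_iff_ne_zero.2 (by positivity)
  have hnR : (0:ℝ) < n := by exact_mod_cast hn1
  have hmR : (0:ℝ) < m := by exact_mod_cast hm1
  -- 4 / ε ≤ n and m
  have hceil : (4 / ε : ℝ) ≤ (n : ℝ) := by
    calc (4 / ε : ℝ) ≤ (⌈4 / ε⌉₊ : ℝ) := Nat.le_ceil _
      _ ≤ (n : ℝ) := by exact_mod_cast le_trans (le_max_right _ _) hn
  have hceilm : (4 / ε : ℝ) ≤ (m : ℝ) := by
    calc (4 / ε : ℝ) ≤ (⌈4 / ε⌉₊ : ℝ) := Nat.le_ceil _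
      _ ≤ (m : ℝ) := by exact_mod_cast le_trans (le_max_right _ _) hm
  have hn4 : 1 / (n : ℝ) ≤ ε / 4 := by
    rw [div_le_div_iff₀ hnR (by norm_num)]
    rw [div_le_iff₀ hε] at hceil
    linarith
  have hm4 : 1 / (m : ℝ) ≤ ε / 4 := by
    rw [div_le_div_iff₀ hmR (by norm_num)]
    rw [div_le_iff₀ hε] at hceilm
    linarith
  have step1 := rect n m hn1 hm1
  have step2 := htail' (n * m) hnm
  have hnmR : (n : ℝ) ≤ ((n * m : ℕ) : ℝ) := by
    exact_mod_cast Nat.le_mul_of_pos_right n hm1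
  have step2' : |f (n * m, n * m) - L| ≤ 2 / (n : ℝ) := by
    refine le_trans step2 ?_
    apply div_le_div_of_nonneg_left (by norm_num) hnR hnmR
  calc |f (n, m) - L| ≤ |f (n, m) - f (n * m, n * m)| + |f (n * m, n * m) - L| :=
        abs_sub_le _ _ _
    _ ≤ (1 / n + 1 / m) + 2 / (n : ℝ) := add_le_add step1 step2'
    _ ≤ ε := by
        have : 2 / (n : ℝ) = 2 * (1 / n) := by ring
        rw [this]
        linarith
end

section
/- Let F : ℕ × ℕ → ℝ satisfy |F(n,m)| ≤ nm for all n,m, and be a quasi-morphism in each variable: |F(n₁+n₂,m) - F(n₁,m) - F(n₂,m)| ≤ m and |F(n,m₁+m₂) - F(n,m₁) - F(n,m₂)| ≤ n. Then the function f(n,m) := F(n,m)/(nm) converges as n,m → ∞: there exists L ∈ ℝ such that for every ε > 0 there exists N such that |f(n,m) - L| ≤ ε for all n,m ≥ N. -/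
private lemma aux_mul (F : ℕ × ℕ → ℝ)
    (h1 : ∀ n₁ n₂ m : ℕ, 1 ≤ n₁ → 1 ≤ n₂ → 1 ≤ m →
      |F (n₁ + n₂, m) - F (n₁, m) - F (n₂, m)| ≤ m) :
    ∀ n n' m : ℕ, 1 ≤ n → 1 ≤ n' → 1 ≤ m →
      |F (n * n', m) - n' * F (n, m)| ≤ ((n' : ℝ) - 1) * m := by
  intro n n' m hn hn' hm
  induction n', hn' using Nat.le_induction with
  | base => simp
  | succ k hk ih =>
    have hstep := h1 (n * k) n m (Nat.one_le_iff_ne_zero.2 (by positivity)) hn hm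
    have : F (n * (k + 1), m) - ((k : ℝ) + 1) * F (n, m)
        = (F (n * k + n, m) - F (n * k, m) - F (n, m))
          + (F (n * k, m) - (k : ℝ) * F (n, m)) := by
      rw [Nat.mul_succ]; ring
    push_cast
    rw [this]
    calc |(F (n * k + n, m) - F (n * k, m) - F (n, m))
          + (F (n * k, m) - (k : ℝ) * F (n, m))|
        ≤ |F (n * k + n, m) - F (n * k, m) - F (n, m)|
          + |F (n * k, m) - (k : ℝ) * F (n, m)| := abs_add_le _ _
      _ ≤ (m : ℝ) + ((k : ℝ) - 1) * m := add_le_add hstep ih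
      _ = ((k : ℝ) + 1 - 1) * m := by push_cast; ring

private lemma aux_diff (F : ℕ × ℕ → ℝ)
    (h1 : ∀ n₁ n₂ m : ℕ, 1 ≤ n₁ → 1 ≤ n₂ → 1 ≤ m →
      |F (n₁ + n₂, m) - F (n₁, m) - F (n₂, m)| ≤ m) :
    ∀ n n' m : ℕ, 1 ≤ n → 1 ≤ n' → 1 ≤ m →
      |F (n, m) / (n * m) - F (n', m) / (n' * m)| ≤ 1 / n + 1 / n' := by
  intro n n' m hn hn' hm
  have hn0 : (0 : ℝ) < n := by exact_mod_cast hn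
  have hn'0 : (0 : ℝ) < n' := by exact_mod_cast hn'
  have hm0 : (0 : ℝ) < m := by exact_mod_cast hm
  have hA := aux_mul F h1 n n' m hn hn' hm
  have hB := aux_mul F h1 n' n m hn' hn hm
  rw [Nat.mul_comm n' n] at hB
  have hkey : |(n' : ℝ) * F (n, m) - (n : ℝ) * F (n', m)| ≤ ((n : ℝ) + n') * m := by
    have : (n' : ℝ) * F (n, m) - (n : ℝ) * F (n', m)
        = (F (n * n', m) - (n : ℝ) * F (n', m)) - (F (n * n', m) - (n' : ℝ) * F (n, m)) := by
      ring
    rw [this]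
    calc |(F (n * n', m) - (n : ℝ) * F (n', m)) - (F (n * n', m) - (n' : ℝ) * F (n, m))|
        ≤ |F (n * n', m) - (n : ℝ) * F (n', m)| + |F (n * n', m) - (n' : ℝ) * F (n, m)| :=
          abs_sub _ _
      _ ≤ ((n : ℝ) - 1) * m + ((n' : ℝ) - 1) * m := add_le_add hB hA
      _ ≤ ((n : ℝ) + n') * m := by nlinarith
  have heq : F (n, m) / (n * m) - F (n', m) / (n' * m)
      = ((n' : ℝ) * F (n, m) - (n : ℝ) * F (n', m)) / (n * n' * m) := by
    field_simp
  rw [heq, abs_div, abs_of_pos (by positivity : (0:ℝ) < (n : ℝ) * n' * m)]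
  rw [div_le_iff₀ (by positivity)]
  calc |(n' : ℝ) * F (n, m) - (n : ℝ) * F (n', m)| ≤ ((n : ℝ) + n') * m := hkey
    _ = (1 / n + 1 / n') * ((n : ℝ) * n' * m) := by field_simp; ring

theorem stmt2 (F : ℕ × ℕ → ℝ)
    (hbd : ∀ n m : ℕ, |F (n, m)| ≤ n * m)
    (h1 : ∀ n₁ n₂ m : ℕ, 1 ≤ n₁ → 1 ≤ n₂ → 1 ≤ m →
      |F (n₁ + n₂, m) - F (n₁, m) - F (n₂, m)| ≤ m)
    (h2 : ∀ n m₁ m₂ : ℕ, 1 ≤ n → 1 ≤ m₁ → 1 ≤ m₂ →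
      |F (n, m₁ + m₂) - F (n, m₁) - F (n, m₂)| ≤ n) :
    ∃ L : ℝ, ∀ ε > 0, ∃ N : ℕ, ∀ n m : ℕ, N ≤ n → N ≤ m →
      |F (n, m) / (n * m) - L| ≤ ε := by
  -- second-variable version via swapping
  have hdiff2 : ∀ n m m' : ℕ, 1 ≤ n → 1 ≤ m → 1 ≤ m' →
      |F (n, m) / (n * m) - F (n, m') / (n * m')| ≤ 1 / m + 1 / m' := by
    intro n m m' hn hm hm'
    have := aux_diff (fun p => F (p.2, p.1))
      (by intro a b c ha hb hc; exact h2 c a b hc ha hb) m m' n hm hm' hn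
    simpa [mul_comm] using this
  have hdiff1 := aux_diff F h1
  -- difference of general terms vs diagonal
  have hdd : ∀ n m k : ℕ, 1 ≤ n → 1 ≤ m → 1 ≤ k →
      |F (n, m) / (n * m) - F (k, k) / (k * k)| ≤ 1 / n + 1 / m + 2 / k := by
    intro n m k hn hm hk
    calc |F (n, m) / (n * m) - F (k, k) / (k * k)|
        ≤ |F (n, m) / (n * m) - F (k, m) / (k * m)|
          + |F (k, m) / (k * m) - F (k, k) / (k * k)| := abs_sub_le _ _ _
      _ ≤ (1 / n + 1 / k) + (1 / m + 1 / k) :=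
          add_le_add (hdiff1 n k m hn hk hm) (hdiff2 k m k hk hm hk)
      _ = 1 / n + 1 / m + 2 / k := by ring
  set b : ℕ → ℝ := fun k => F (k, k) / (k * k) with hb
  have hcauchy : CauchySeq b := by
    rw [Metric.cauchySeq_iff']
    intro ε hε
    obtain ⟨N₀, hN₀⟩ := exists_nat_gt (4 / ε)
    refine ⟨max N₀ 1, fun n hn => ?_⟩
    have hN1 : 1 ≤ max N₀ 1 := le_max_right _ _
    have hn1 : 1 ≤ n := hN1.trans hn
    have hNpos : (0 : ℝ) < max N₀ 1 := by exact_mod_cast hN1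
    have hbound := hdd n n (max N₀ 1) hn1 hn1 hN1
    rw [Real.dist_eq]
    have h1n : 1 / (n : ℝ) ≤ 1 / (max N₀ 1 : ℕ) := by
      apply one_div_le_one_div_of_le hNpos
      exact_mod_cast hn
    have : |b n - b (max N₀ 1)| ≤ 4 / (max N₀ 1 : ℕ) := by
      calc |b n - b (max N₀ 1)| ≤ 1 / n + 1 / n + 2 / (max N₀ 1 : ℕ) := hbound
        _ ≤ 1 / (max N₀ 1 : ℕ) + 1 / (max N₀ 1 : ℕ) + 2 / (max N₀ 1 : ℕ) := by
            linarith
        _ = 4 / (max N₀ 1 : ℕ) := by ring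
    refine lt_of_le_of_lt this ?_
    rw [div_lt_iff₀ hNpos]
    have hN0le : (N₀ : ℝ) ≤ (max N₀ 1 : ℕ) := by exact_mod_cast le_max_left N₀ 1
    have : 4 / ε < (max N₀ 1 : ℕ) := lt_of_lt_of_le hN₀ hN0le
    rw [div_lt_iff₀ hε] at this
    linarith
  obtain ⟨L, hL⟩ := cauchySeq_tendsto_of_complete hcauchy
  refine ⟨L, ?_⟩
  -- key bound: for n,m ≥ 1, |f(n,m) - L| ≤ 1/n + 1/m
  have hkey : ∀ n m : ℕ, 1 ≤ n → 1 ≤ m → |F (n, m) / (n * m) - L| ≤ 1 / n + 1 / m := by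
    intro n m hn hm
    have t1 : Filter.Tendsto (fun k => |F (n, m) / (n * m) - b k|) Filter.atTop
        (nhds |F (n, m) / (n * m) - L|) :=
      ((continuous_abs.tendsto _).comp ((tendsto_const_nhds.sub hL)))
    have t2 : Filter.Tendsto (fun k : ℕ => 1 / (n : ℝ) + 1 / m + 2 / k) Filter.atTop
        (nhds (1 / (n : ℝ) + 1 / m + 0)) := by
      exact Filter.Tendsto.add tendsto_const_nhds (tendsto_const_div_atTop_nhds_zero_nat 2)
    have hle : ∀ᶠ k in Filter.atTop, |F (n, m) / (n * m) - b k| ≤ 1 / (n:ℝ) + 1 / m + 2 / k :=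
      Filter.eventually_atTop.2 ⟨1, fun k hk => hdd n m k hn hm hk⟩
    have := le_of_tendsto_of_tendsto t1 t2 hle
    simpa using this
  intro ε hε
  obtain ⟨N₀, hN₀⟩ := exists_nat_gt (2 / ε)
  refine ⟨max N₀ 1, fun n m hn hm => ?_⟩
  have hN1 : 1 ≤ max N₀ 1 := le_max_right _ _
  have hNpos : (0 : ℝ) < max N₀ 1 := by exact_mod_cast hN1
  have hn1 : 1 ≤ n := hN1.trans hn
  have hm1 : 1 ≤ m := hN1.trans hm
  have h1n : 1 / (n : ℝ) ≤ 1 / (max N₀ 1 : ℕ) :=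
    one_div_le_one_div_of_le hNpos (by exact_mod_cast hn)
  have h1m : 1 / (m : ℝ) ≤ 1 / (max N₀ 1 : ℕ) :=
    one_div_le_one_div_of_le hNpos (by exact_mod_cast hm)
  have hNε : 2 / (max N₀ 1 : ℕ) ≤ ε := by
    have hN0le : (N₀ : ℝ) ≤ (max N₀ 1 : ℕ) := by exact_mod_cast le_max_left N₀ 1
    have : 2 / ε < (max N₀ 1 : ℕ) := lt_of_lt_of_le hN₀ hN0le
    rw [div_le_iff₀ hNpos]
    rw [div_lt_iff₀ hε] at this
    linarith
  calc |F (n, m) / (n * m) - L| ≤ 1 / n + 1 / m := hkey n m hn1 hm1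
    _ ≤ 1 / (max N₀ 1 : ℕ) + 1 / (max N₀ 1 : ℕ) := add_le_add h1n h1m
    _ = 2 / (max N₀ 1 : ℕ) := by ring
    _ ≤ ε := hNε
end
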